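/- arXiv:2011.03935 — 2 statements merged into one kernel-verified Lean document; each statement's English description precedes it below -/
import Mathlib

section
/- Let ζ ∈ {1, −1, i, −i} ⊂ ℂ. The optimal transmit powers for the data vectors d and ζ·d coincide: the infimum of ‖x‖ over x ∈ F(ζ·d) equals the infimum of ‖x‖ over x ∈ F(d). -/
open Complex

/-- The sign-aligned exceedance relation `R(a,b)`. -/
def signAligned (a b : ℝ) : Prop := (0 ≤ b ∧ b ≤ a) ∨ (b ≤ 0 ∧ a ≤ b)

/-- The symbol-level-precoding feasible set `F(d)` for channel rows `h j`,
noise level `σ`, SNR targets `γ j` and data vector `d`. -/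
def slpFeasible {M K : ℕ} (h : Fin K → Fin M → ℂ) (σ : ℝ) (γ : Fin K → ℝ)
    (d : Fin K → ℂ) : Set (EuclideanSpace ℂ (Fin M)) :=
  {x | ∀ j : Fin K,
    signAligned (∑ m, h j m * x m).re (σ * Real.sqrt (γ j) * (d j).re) ∧
    signAligned (∑ m, h j m * x m).im (σ * Real.sqrt (γ j) * (d j).im)}

lemma signAligned_neg {a b : ℝ} : signAligned (-a) (-b) ↔ signAligned a b := by
  unfold signAligned
  constructor <;> rintro (⟨h1, h2⟩ | ⟨h1, h2⟩)
  · exact Or.inr ⟨by linarith, by linarith⟩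
  · exact Or.inl ⟨by linarith, by linarith⟩
  · exact Or.inr ⟨by linarith, by linarith⟩
  · exact Or.inl ⟨by linarith, by linarith⟩

lemma sum_smul_eq {M K : ℕ} (h : Fin K → Fin M → ℂ) (ζ : ℂ)
    (x : EuclideanSpace ℂ (Fin M)) (j : Fin K) :
    (∑ m, h j m * (ζ • x) m) = ζ * ∑ m, h j m * x m := by
  rw [Finset.mul_sum]
  refine Finset.sum_congr rfl fun m _ => ?_
  simp [PiLp.smul_apply, smul_eq_mul]; ring

lemma key {M K : ℕ} (h : Fin K → Fin M → ℂ) (σ : ℝ) (γ : Fin K → ℝ)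
    (d : Fin K → ℂ) (ζ : ℂ)
    (hζ : ζ ∈ ({1, -1, Complex.I, -Complex.I} : Set ℂ))
    (x : EuclideanSpace ℂ (Fin M)) :
    ζ • x ∈ slpFeasible h σ γ (ζ • d) ↔ x ∈ slpFeasible h σ γ d := by
  simp only [slpFeasible, Set.mem_setOf_eq, sum_smul_eq, Pi.smul_apply, smul_eq_mul]
  rcases hζ with rfl | rfl | rfl | rfl
  · simp
  · simp only [neg_mul, one_mul, Complex.neg_re, Complex.neg_im, mul_neg, signAligned_neg]
  · simp only [Complex.I_mul_re, Complex.I_mul_im, mul_neg, signAligned_neg]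
    exact forall_congr' fun j => and_comm
  · simp only [neg_mul, Complex.neg_re, Complex.neg_im, Complex.I_mul_re, Complex.I_mul_im,
      neg_neg, mul_neg, signAligned_neg]
    exact forall_congr' fun j => and_comm

theorem stmt_2 {M K : ℕ} (h : Fin K → Fin M → ℂ) (σ : ℝ) (hσ : 0 < σ)
    (γ : Fin K → ℝ) (hγ : ∀ j, 0 < γ j) (d : Fin K → ℂ) (ζ : ℂ)
    (hζ : ζ ∈ ({1, -1, Complex.I, -Complex.I} : Set ℂ)) :
    sInf ((fun x : EuclideanSpace ℂ (Fin M) => ‖x‖) '' slpFeasible h σ γ (ζ • d)) =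
      sInf ((fun x : EuclideanSpace ℂ (Fin M) => ‖x‖) '' slpFeasible h σ γ d) := by
  have hζ0 : ζ ≠ 0 := by
    rcases hζ with rfl | rfl | rfl | rfl <;> simp [Complex.I_ne_zero]
  have hζn : ‖ζ‖ = 1 := by
    rcases hζ with rfl | rfl | rfl | rfl <;> simp
  congr 1
  ext r
  simp only [Set.mem_image]
  constructor
  · rintro ⟨y, hy, rfl⟩
    refine ⟨ζ⁻¹ • y, ?_, ?_⟩
    · have := (key h σ γ d ζ hζ (ζ⁻¹ • y)).mp
      rw [smul_smul, mul_inv_cancel₀ hζ0, one_smul] at this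
      exact this hy
    · rw [norm_smul, norm_inv, hζn]; simp
  · rintro ⟨y, hy, rfl⟩
    exact ⟨ζ • y, (key h σ γ d ζ hζ y).mpr hy, by rw [norm_smul, hζn, one_mul]⟩
end

section
/- Let l ≤ u be real numbers with u − l ≤ π. Then the convex hull (over ℝ) of D[l,u] equals P[l,u]. -/
/-- The arc-cone set `D[l,u] = {(r cos θ, r sin θ) : r ≥ 1, l ≤ θ ≤ u}`. -/
def Darc (l u : ℝ) : Set (ℝ × ℝ) :=
  {p | ∃ r θ : ℝ, 1 ≤ r ∧ l ≤ θ ∧ θ ≤ u ∧ p = (r * Real.cos θ, r * Real.sin θ)}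

/-- The polyhedron `P[l,u]` given by the two angular cuts and the chord cut. -/
def Parc (l u : ℝ) : Set (ℝ × ℝ) :=
  {p | Real.sin l * p.1 - Real.cos l * p.2 ≤ 0 ∧
       Real.sin u * p.1 - Real.cos u * p.2 ≥ 0 ∧
       ((Real.cos l + Real.cos u) / 2) * p.1 + ((Real.sin l + Real.sin u) / 2) * p.2 ≥
         ((Real.cos l + Real.cos u) / 2) ^ 2 + ((Real.sin l + Real.sin u) / 2) ^ 2}

/-!
Write `e θ = (cos θ, sin θ)` and `m` for the midpoint of `e l` and `e u`; the chord cut of `P[l,u]`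
reads `⟪m, p⟫ ≥ ‖m‖²`. At `p = r • e θ` it becomes
`r (cos (θ - l) + cos (u - θ)) ≥ 1 + cos (u - l)`, which holds because
`cos A + cos B - 1 - cos (A + B) = 4 cos ((A + B) / 2) sin (A / 2) sin (B / 2) ≥ 0`
for `A, B ≥ 0`, `A + B ≤ π`. Hence `D[l,u] ⊆ P[l,u]`, and `P[l,u]` is convex.

Conversely, if `l < u < l + π`, every `p ∈ P[l,u]` is `α • e l + β • e u` with `α, β ≥ 0`, and the
chord cut says exactly `α + β ≥ 1`, so `p` is a convex combination of `(α + β) • e l` and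
`(α + β) • e u`. If `u = l + π`, `P[l,u]` is a closed half-plane and `p` is the midpoint of
`p ± T • e l`, which lie in `D[l,u]` for large `T`. If `l = u`, both sets are the same ray.
-/

open Real

namespace Real

theorem cos_two_mul_add_cos_two_mul_sub_one_sub_cos (x y : ℝ) :
    cos (2 * x) + cos (2 * y) - 1 - cos (2 * x + 2 * y) = 4 * cos (x + y) * sin x * sin y := by
  rw [cos_add, cos_add, cos_two_mul, cos_two_mul, sin_two_mul, sin_two_mul]
  linear_combination
    4 * sin y ^ 2 * sin_sq_add_cos_sq x + 4 * (1 - cos x ^ 2) * sin_sq_add_cos_sq y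

theorem one_add_cos_add_le_cos_add_cos {A B : ℝ} (hA : 0 ≤ A) (hB : 0 ≤ B) (hAB : A + B ≤ π) :
    1 + cos (A + B) ≤ cos A + cos B := by
  obtain ⟨x, rfl⟩ : ∃ x, A = 2 * x := ⟨A / 2, by ring⟩
  obtain ⟨y, rfl⟩ : ∃ y, B = 2 * y := ⟨B / 2, by ring⟩
  have hcos : 0 ≤ cos (x + y) := cos_nonneg_of_mem_Icc ⟨by linarith, by linarith⟩
  have hx : 0 ≤ sin x := sin_nonneg_of_nonneg_of_le_pi (by linarith) (by linarith)
  have hy : 0 ≤ sin y := sin_nonneg_of_nonneg_of_le_pi (by linarith) (by linarith)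
  have := cos_two_mul_add_cos_two_mul_sub_one_sub_cos x y
  have : 0 ≤ 4 * cos (x + y) * sin x * sin y := by positivity
  linarith

end Real

theorem midpoint_cos_sin_mul_cos_add_mul_sin (l u θ : ℝ) :
    (cos l + cos u) / 2 * cos θ + (sin l + sin u) / 2 * sin θ =
      (cos (θ - l) + cos (u - θ)) / 2 := by
  rw [cos_sub, cos_sub]
  ring

theorem midpoint_cos_sin_sq (l u : ℝ) :
    ((cos l + cos u) / 2) ^ 2 + ((sin l + sin u) / 2) ^ 2 = (1 + cos (u - l)) / 2 := by
  rw [cos_sub]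
  linear_combination (1 / 4 : ℝ) * sin_sq_add_cos_sq l + (1 / 4 : ℝ) * sin_sq_add_cos_sq u

theorem Darc_subset_Parc {l u : ℝ} (hπ : u - l ≤ π) : Darc l u ⊆ Parc l u := by
  rintro _ ⟨r, θ, hr, hlθ, hθu, rfl⟩
  have hsl : 0 ≤ sin (θ - l) := sin_nonneg_of_nonneg_of_le_pi (by linarith) (by linarith)
  have hsu : 0 ≤ sin (u - θ) := sin_nonneg_of_nonneg_of_le_pi (by linarith) (by linarith)
  have hchord : 1 + cos (u - l) ≤ cos (θ - l) + cos (u - θ) := by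
    have := one_add_cos_add_le_cos_add_cos (sub_nonneg.2 hlθ) (sub_nonneg.2 hθu) (by linarith)
    rwa [sub_add_sub_cancel'] at this
  refine ⟨?_, ?_, ?_⟩
  · have : sin l * (r * cos θ) - cos l * (r * sin θ) = -(r * sin (θ - l)) := by
      rw [sin_sub]; ring
    simp only [this, neg_nonpos]
    positivity
  · have : sin u * (r * cos θ) - cos u * (r * sin θ) = r * sin (u - θ) := by
      rw [sin_sub]; ring
    simp only [this, ge_iff_le]
    positivity
  · have : (cos l + cos u) / 2 * (r * cos θ) + (sin l + sin u) / 2 * (r * sin θ) =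
        r * ((cos (θ - l) + cos (u - θ)) / 2) := by
      rw [← midpoint_cos_sin_mul_cos_add_mul_sin]; ring
    simp only [this, midpoint_cos_sin_sq, ge_iff_le]
    calc (1 + cos (u - l)) / 2 ≤ (cos (θ - l) + cos (u - θ)) / 2 := by linarith
      _ ≤ r * ((cos (θ - l) + cos (u - θ)) / 2) :=
        le_mul_of_one_le_left (by linarith [neg_one_le_cos (u - l)]) hr

theorem convex_Parc (l u : ℝ) : Convex ℝ (Parc l u) := by
  rintro p ⟨hp₁, hp₂, hp₃⟩ q ⟨hq₁, hq₂, hq₃⟩ a b ha hb hab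
  refine ⟨?_, ?_, ?_⟩ <;>
  · simp only [Prod.fst_add, Prod.snd_add, Prod.smul_fst, Prod.smul_snd, smul_eq_mul]
    nlinarith

theorem Parc_self_subset_Darc (l : ℝ) : Parc l l ⊆ Darc l l := by
  rintro p ⟨h₁, h₂, h₃⟩
  have hperp : sin l * p.1 - cos l * p.2 = 0 := le_antisymm h₁ h₂
  have hpyth := sin_sq_add_cos_sq l
  refine ⟨cos l * p.1 + sin l * p.2, l, by nlinarith, le_rfl, le_rfl, ?_⟩
  ext
  · linear_combination sin l * hperp - p.1 * hpyth
  · linear_combination -cos l * hperp - p.2 * hpyth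

theorem mem_convexHull_Darc_of_one_le_add {l u α β : ℝ} (hlu : l ≤ u) (hα : 0 ≤ α) (hβ : 0 ≤ β)
    (hαβ : 1 ≤ α + β) :
    (α * cos l + β * cos u, α * sin l + β * sin u) ∈ convexHull ℝ (Darc l u) := by
  set t := α + β
  have ht0 : 0 < t := by linarith
  have hl : (t * cos l, t * sin l) ∈ Darc l u := ⟨t, l, hαβ, le_rfl, hlu, rfl⟩
  have hu : (t * cos u, t * sin u) ∈ Darc l u := ⟨t, u, hαβ, hlu, le_rfl, rfl⟩
  convert convex_convexHull ℝ _ (subset_convexHull ℝ _ hl) (subset_convexHull ℝ _ hu)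
    (div_nonneg hα ht0.le) (div_nonneg hβ ht0.le) (by rw [← add_div]; exact div_self ht0.ne')
    using 1
  ext <;> simp only [Prod.fst_add, Prod.snd_add, Prod.smul_mk, smul_eq_mul] <;> field_simp

theorem mem_Darc_add_pi {l : ℝ} {p : ℝ × ℝ} (hp : sin l * p.1 - cos l * p.2 ≤ 0)
    (hnorm : 1 ≤ p.1 ^ 2 + p.2 ^ 2) : p ∈ Darc l (l + π) := by
  -- `s`, `h` are the coordinates of `p` in the frame `(e l, e (l + π / 2))`, and `h ≥ 0`.
  set s := cos l * p.1 + sin l * p.2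
  set h := cos l * p.2 - sin l * p.1
  set r := √(p.1 ^ 2 + p.2 ^ 2)
  have hr0 : 0 < r := sqrt_pos.2 (by linarith)
  have hr1 : 1 ≤ r := one_le_sqrt.2 hnorm
  have hsh : s ^ 2 + h ^ 2 = r ^ 2 := by
    rw [sq_sqrt (by positivity)]
    linear_combination (p.1 ^ 2 + p.2 ^ 2) * sin_sq_add_cos_sq l
  obtain ⟨hsr₁, hsr₂⟩ : -1 ≤ s / r ∧ s / r ≤ 1 := by
    rw [← abs_le, abs_div, abs_of_pos hr0, div_le_one hr0]
    exact abs_le_of_sq_le_sq (by nlinarith) hr0.le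
  refine ⟨r, l + arccos (s / r), hr1, by linarith [arccos_nonneg (s / r)],
    by linarith [arccos_le_pi (s / r)], ?_⟩
  have hcos : cos (arccos (s / r)) = s / r := cos_arccos hsr₁ hsr₂
  have hsin : sin (arccos (s / r)) = h / r := by
    rw [sin_arccos, show 1 - (s / r) ^ 2 = (h / r) ^ 2 by field_simp; linarith,
      sqrt_sq (div_nonneg (by linarith) hr0.le)]
  rw [cos_add, sin_add, hcos, hsin]
  ext <;> field_simp
  · linear_combination -p.1 * sin_sq_add_cos_sq l
  · linear_combination -p.2 * sin_sq_add_cos_sq l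

theorem Parc_add_pi_subset_convexHull (l : ℝ) :
    Parc l (l + π) ⊆ convexHull ℝ (Darc l (l + π)) := by
  rintro p ⟨hp, -, -⟩
  set s := cos l * p.1 + sin l * p.2
  have shift_mem : ∀ c : ℝ, 1 ≤ |s + c| → p + c • (cos l, sin l) ∈ Darc l (l + π) := by
    intro c hc
    rw [← one_le_sq_iff_one_le_abs] at hc
    apply mem_Darc_add_pi
    · simp only [Prod.fst_add, Prod.snd_add, Prod.smul_mk, smul_eq_mul]
      linarith
    · simp only [Prod.fst_add, Prod.snd_add, Prod.smul_mk, smul_eq_mul]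
      have hsplit : (p.1 + c * cos l) ^ 2 + (p.2 + c * sin l) ^ 2 =
          (s + c) ^ 2 + (cos l * p.2 - sin l * p.1) ^ 2 := by
        linear_combination (c ^ 2 - p.1 ^ 2 - p.2 ^ 2) * sin_sq_add_cos_sq l
      nlinarith [sq_nonneg (cos l * p.2 - sin l * p.1)]
  set T := |s| + 1
  have hplus := shift_mem T (by rw [abs_of_nonneg] <;> linarith [neg_abs_le s])
  have hminus := shift_mem (-T) (by rw [abs_of_nonpos] <;> linarith [le_abs_self s])
  rw [neg_smul, ← sub_eq_add_neg] at hminus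
  exact (convex_convexHull ℝ _).segment_subset (subset_convexHull ℝ _ hminus)
    (subset_convexHull ℝ _ hplus) (mem_segment_sub_add p _)

theorem Parc_subset_convexHull_of_lt {l u : ℝ} (hlu : l < u) (hπ : u - l < π) :
    Parc l u ⊆ convexHull ℝ (Darc l u) := by
  rintro p ⟨h₁, h₂, h₃⟩
  have hS : 0 < sin (u - l) := sin_pos_of_pos_of_lt_pi (by linarith) hπ
  have hC : 0 < 1 + cos (u - l) := by
    have := cos_lt_cos_of_nonneg_of_le_pi (by linarith) le_rfl hπ
    rw [cos_pi] at this
    linarith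
  rw [sin_sub] at hS
  set α := (sin u * p.1 - cos u * p.2) / (sin u * cos l - cos u * sin l)
  set β := (cos l * p.2 - sin l * p.1) / (sin u * cos l - cos u * sin l)
  have hp : p = (α * cos l + β * cos u, α * sin l + β * sin u) := by
    ext <;> simp only [α, β] <;> field_simp <;> ring
  have hαβ : 1 ≤ α + β := by
    have hl := midpoint_cos_sin_mul_cos_add_mul_sin l u l
    have hu := midpoint_cos_sin_mul_cos_add_mul_sin l u u
    rw [sub_self, cos_zero] at hl hu
    rw [hp, midpoint_cos_sin_sq] at h₃
    have key : 1 * ((1 + cos (u - l)) / 2) ≤ (α + β) * ((1 + cos (u - l)) / 2) := by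
      linear_combination h₃ + α * hl + β * hu
    exact le_of_mul_le_mul_right key (by linarith)
  rw [hp]
  exact mem_convexHull_Darc_of_one_le_add hlu.le (div_nonneg (by linarith) hS.le)
    (div_nonneg (by linarith) hS.le) hαβ

theorem stmt_14 (l u : ℝ) (hlu : l ≤ u) (hπ : u - l ≤ Real.pi) :
    convexHull ℝ (Darc l u) = Parc l u := by
  refine (convexHull_min (Darc_subset_Parc hπ) (convex_Parc l u)).antisymm ?_
  rcases hlu.eq_or_lt with rfl | hlu
  · exact (Parc_self_subset_Darc l).trans (subset_convexHull ℝ _)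
  rcases hπ.eq_or_lt with hπ | hπ
  · obtain rfl : u = l + π := by linarith
    exact Parc_add_pi_subset_convexHull l
  · exact Parc_subset_convexHull_of_lt hlu hπ
end
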